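/- arXiv:2301.04863 — 2 statements merged into one kernel-verified Lean document; each statement's English description precedes it below -/
import Mathlib

section
/- If the approximate misfit Φ^a and the enhanced noise misfit Φ^e both belong to L¹_{μ_θ}, then max{ d_KL(μ^a ‖ μ^e), d_KL(μ^e ‖ μ^a) } ≤ C · ( |O m_ε|_{Σ_η^{−1}} + ‖ |y − O∘M − O m_ε|²_{Σ_η^{−1} − (Σ_η+S)^{−1}} ‖_{L¹_{μ_θ}} ), where μ^a := (μ_θ)_{Φ^a}, μ^e := (μ_θ)_{Φ^e}, and C = exp( 2‖Φ^a‖_{L¹_{μ_θ}} + 2‖Φ^e‖_{L¹_{μ_θ}} ) · max{ √2 · ( ‖Φ^a‖_{L¹_{μ_θ}}^{1/2} + C_e · ‖Φ^e‖_{L¹_{μ_θ}}^{1/2} ), 1 }. -/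
open MeasureTheory Real Matrix ENNReal

open Classical in
/-- Kullback--Leibler divergence. -/
noncomputable def KLdiv {X : Type*} [MeasurableSpace X] (μ ν : Measure X) : ℝ≥0∞ :=
  if μ ≪ ν ∧ Integrable (fun x => Real.log ((μ.rnDeriv ν x).toReal)) μ
  then ENNReal.ofReal (∫ x, Real.log ((μ.rnDeriv ν x).toReal) ∂μ)
  else ⊤

/-- The posterior measure `μ_Φ` with density `exp (-Φ) / Z` w.r.t. `μ`. -/
noncomputable def posterior {X : Type*} [MeasurableSpace X] (μ : Measure X) (Φ : X → ℝ) :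
    Measure X :=
  μ.withDensity fun x => ENNReal.ofReal (Real.exp (-Φ x) / ∫ x', Real.exp (-Φ x') ∂μ)

/-- The ℓ²→ℓ² operator norm of a real square matrix. -/
noncomputable def matOpNorm {n : ℕ} (A : Matrix (Fin n) (Fin n) ℝ) : ℝ :=
  ‖LinearMap.toContinuousLinearMap (Matrix.toEuclideanLin A)‖

open scoped ComplexOrder in
/-- The square root of a positive semidefinite matrix, as `Matrix.PosSemidef.sqrt` was defined
in the older Mathlib (since removed there). -/
noncomputable def posSemidefSqrt {n 𝕜 : Type*} [Fintype n] [DecidableEq n] [RCLike 𝕜]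
    {A : Matrix n n 𝕜} (hA : A.PosSemidef) : Matrix n n 𝕜 :=
  hA.1.eigenvectorUnitary.1 * diagonal ((↑) ∘ (√·) ∘ hA.1.eigenvalues) *
    (star hA.1.eigenvectorUnitary : Matrix n n 𝕜)

/-!
Both posteriors are exponential tilts of `μ`, so `log (dμ₁/dμ₂) = Φ₂ - Φ₁ - log (Z₁/Z₂)`.
The tilted integral of `Φ₂ - Φ₁` and `log (Z₂/Z₁) ≤ Z₂/Z₁ - 1` are both at most
`Z₁⁻¹ ‖Φ₁ - Φ₂‖_{L¹}`, and Jensen gives `Z₁⁻¹ ≤ exp ∫ Φ₁`; hence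
`d_KL ≤ 2 exp (∫ Φ₁) ‖Φ₁ - Φ₂‖_{L¹}`.

For the misfits write `z = y - O M - O m_ε` and `b = O m_ε`. Then
`2 (Φᵃ - Φᵉ) = ⟨2 z + b, b⟩_{Σ⁻¹} + |z|²_{Σ⁻¹ - (Σ+S)⁻¹}`, and Cauchy-Schwarz together with
`|z|_{Σ⁻¹} ≤ C_e |z|_{(Σ+S)⁻¹}` (factor `Σ^{-1/2} = Σ^{-1/2} (Σ+S)^{1/2} (Σ+S)^{-1/2}`) bounds the
first term by `|b|_{Σ⁻¹} (√(2Φᵃ) + C_e √(2Φᵉ))`; Jensen for `√` finishes the integration.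
-/

lemma exp_neg_sub_exp_neg_le {a b : ℝ} (hb : 0 ≤ b) : exp (-b) - exp (-a) ≤ |a - b| := by
  have hexp : exp (-a) = exp (-b) * exp (b - a) := by rw [← exp_add]; ring_nf
  have hlin : exp (-b) * (1 - exp (b - a)) ≤ exp (-b) * |a - b| :=
    mul_le_mul_of_nonneg_left (by linarith [add_one_le_exp (b - a), le_abs_self (a - b)])
      (exp_pos _).le
  have hle : exp (-b) ≤ 1 := exp_le_one_iff.mpr (neg_nonpos.mpr hb)
  nlinarith [abs_nonneg (a - b)]

section Posterior

variable {α : Type*} {mα : MeasurableSpace α} {μ : Measure α}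

lemma posterior_eq_tilted (μ : Measure α) (Φ : α → ℝ) :
    posterior μ Φ = μ.tilted fun x => -Φ x := rfl

lemma KLdiv_le_ofReal {ν : Measure α} (hμν : μ ≪ ν) (hint : Integrable (llr μ ν) μ) {c : ℝ}
    (hc : ∫ x, llr μ ν x ∂μ ≤ c) : KLdiv μ ν ≤ ENNReal.ofReal c := by
  rw [KLdiv, if_pos ⟨hμν, hint⟩]
  exact ENNReal.ofReal_le_ofReal hc

lemma integrable_exp_neg_of_nonneg [IsFiniteMeasure μ] {Φ : α → ℝ}
    (hΦ : AEStronglyMeasurable Φ μ) (hΦ0 : ∀ x, 0 ≤ Φ x) :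
    Integrable (fun x => exp (-Φ x)) μ := by
  refine (integrable_const (1 : ℝ)).mono' (continuous_exp.comp_aestronglyMeasurable hΦ.neg) ?_
  filter_upwards with x
  rw [norm_of_nonneg (exp_pos _).le]
  exact exp_le_one_iff.mpr (neg_nonpos.mpr (hΦ0 x))

lemma integrable_tilted_of_nonpos {f g : α → ℝ} (hf : Integrable (fun x => exp (f x)) μ)
    (hf0 : ∀ x, f x ≤ 0) (hg : Integrable g μ) : Integrable g (μ.tilted f) := by
  rw [integrable_tilted_iff hf]
  refine hg.bdd_mul (c := 1) hf.1 (ae_of_all _ fun x => ?_)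
  rw [norm_of_nonneg (exp_pos _).le]
  exact exp_le_one_iff.mpr (hf0 x)

lemma integrable_sqrt_of_nonneg [IsFiniteMeasure μ] {f : α → ℝ} (hf : Integrable f μ)
    (hf0 : ∀ x, 0 ≤ f x) : Integrable (fun x => √(f x)) μ := by
  have hmeas : AEStronglyMeasurable (fun x => √(f x)) μ :=
    continuous_sqrt.comp_aestronglyMeasurable hf.1
  refine ((memLp_two_iff_integrable_sq hmeas).mpr ?_).integrable one_le_two
  simpa only [sq_sqrt (hf0 _)] using hf

lemma integral_tilted_le_of_nonpos {f g : α → ℝ} (hf0 : ∀ x, f x ≤ 0) (hg : Integrable g μ) :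
    ∫ x, g x ∂(μ.tilted f) ≤ (∫ x, exp (f x) ∂μ)⁻¹ * ∫ x, |g x| ∂μ := by
  rw [integral_tilted, ← integral_const_mul]
  refine (le_abs_self _).trans ?_
  rw [← Real.norm_eq_abs]
  refine norm_integral_le_of_norm_le (hg.abs.const_mul _) (ae_of_all _ fun x => ?_)
  have hZ : 0 ≤ ∫ x, exp (f x) ∂μ := integral_nonneg fun x => (exp_pos _).le
  rw [smul_eq_mul, norm_mul, Real.norm_eq_abs, Real.norm_eq_abs, abs_div, abs_of_pos (exp_pos _),
    abs_of_nonneg hZ, div_eq_inv_mul]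
  gcongr
  exact mul_le_of_le_one_right (inv_nonneg.mpr hZ) (exp_le_one_iff.mpr (hf0 x))

variable [IsProbabilityMeasure μ]

lemma inv_integral_exp_neg_le {Φ : α → ℝ} (hΦ : Integrable Φ μ)
    (hexp : Integrable (fun x => exp (-Φ x)) μ) :
    (∫ x, exp (-Φ x) ∂μ)⁻¹ ≤ exp (∫ x, Φ x ∂μ) := by
  have jensen : exp (∫ x, -Φ x ∂μ) ≤ ∫ x, exp (-Φ x) ∂μ :=
    convexOn_exp.map_integral_le continuous_exp.continuousOn isClosed_univ
      (by simp) hΦ.neg hexp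
  rw [integral_neg, exp_neg] at jensen
  simpa using inv_anti₀ (by positivity) jensen

lemma integral_sqrt_le_sqrt_integral {f : α → ℝ} (hf : Integrable f μ) (hf0 : ∀ x, 0 ≤ f x) :
    ∫ x, √(f x) ∂μ ≤ √(∫ x, f x ∂μ) :=
  strictConcaveOn_sqrt.concaveOn.le_map_integral continuous_sqrt.continuousOn isClosed_Ici
    (ae_of_all _ hf0) hf (integrable_sqrt_of_nonneg hf hf0)

lemma llr_tilted_tilted {f g : α → ℝ} (hf : Integrable (fun x => exp (f x)) μ)
    (hg : Integrable (fun x => exp (g x)) μ) :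
    llr (μ.tilted f) (μ.tilted g) =ᵐ[μ]
      fun x => f x - log (∫ z, exp (f z) ∂μ) - (g x - log (∫ z, exp (g z) ∂μ)) := by
  have := isProbabilityMeasure_tilted hg
  have hfg : AEMeasurable f (μ.tilted g) :=
    (aemeasurable_of_aemeasurable_exp hf.1.aemeasurable).mono_ac (tilted_absolutelyContinuous _ _)
  filter_upwards [llr_tilted_left (absolutelyContinuous_tilted hg) hf hfg,
    llr_tilted_right Measure.AbsolutelyContinuous.rfl hg, llr_self μ] with x hleft hright hself
  rw [hleft, hright, hself]
  simp only [Pi.zero_apply]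
  ring

lemma KLdiv_tilted_le {f g : α → ℝ} (hf : Integrable (fun x => exp (f x)) μ)
    (hg : Integrable (fun x => exp (g x)) μ)
    (hfg : Integrable (fun x => f x - g x) (μ.tilted f)) {c : ℝ}
    (hc : ∫ x, f x - g x ∂(μ.tilted f) + log (∫ x, exp (g x) ∂μ) - log (∫ x, exp (f x) ∂μ) ≤ c) :
    KLdiv (μ.tilted f) (μ.tilted g) ≤ ENNReal.ofReal c := by
  have := isProbabilityMeasure_tilted hf
  have hllr := (tilted_absolutelyContinuous μ f).ae_le (llr_tilted_tilted hf hg)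
  have hllr' : llr (μ.tilted f) (μ.tilted g) =ᵐ[μ.tilted f]
      fun x => (f x - g x) + (log (∫ z, exp (g z) ∂μ) - log (∫ z, exp (f z) ∂μ)) := by
    filter_upwards [hllr] with x hx
    rw [hx]; ring
  refine KLdiv_le_ofReal ((tilted_absolutelyContinuous μ f).trans (absolutelyContinuous_tilted hg))
    ((hfg.add (integrable_const _)).congr hllr'.symm) ?_
  rw [integral_congr_ae hllr', integral_add hfg (integrable_const _), integral_const]
  simpa [add_sub_assoc] using hc

lemma log_integral_exp_neg_sub_le {Φ₁ Φ₂ : α → ℝ} (h₁ : Integrable Φ₁ μ) (h₂ : Integrable Φ₂ μ)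
    (h₁0 : ∀ x, 0 ≤ Φ₁ x) (h₂0 : ∀ x, 0 ≤ Φ₂ x) :
    log (∫ x, exp (-Φ₂ x) ∂μ) - log (∫ x, exp (-Φ₁ x) ∂μ) ≤
      (∫ x, exp (-Φ₁ x) ∂μ)⁻¹ * ∫ x, |Φ₁ x - Φ₂ x| ∂μ := by
  have hexp₁ := integrable_exp_neg_of_nonneg h₁.1 h₁0
  have hexp₂ := integrable_exp_neg_of_nonneg h₂.1 h₂0
  have hZ₁ : 0 < ∫ x, exp (-Φ₁ x) ∂μ := integral_exp_pos hexp₁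
  have hZ₂ : 0 < ∫ x, exp (-Φ₂ x) ∂μ := integral_exp_pos hexp₂
  have hdiff : (∫ x, exp (-Φ₂ x) ∂μ) - ∫ x, exp (-Φ₁ x) ∂μ ≤ ∫ x, |Φ₁ x - Φ₂ x| ∂μ := by
    rw [← integral_sub hexp₂ hexp₁]
    exact integral_mono (hexp₂.sub hexp₁) (h₁.sub h₂).abs
      fun x => exp_neg_sub_exp_neg_le (h₂0 x)
  calc log (∫ x, exp (-Φ₂ x) ∂μ) - log (∫ x, exp (-Φ₁ x) ∂μ)
      = log ((∫ x, exp (-Φ₂ x) ∂μ) / ∫ x, exp (-Φ₁ x) ∂μ) := (log_div hZ₂.ne' hZ₁.ne').symm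
    _ ≤ (∫ x, exp (-Φ₂ x) ∂μ) / (∫ x, exp (-Φ₁ x) ∂μ) - 1 :=
      log_le_sub_one_of_pos (div_pos hZ₂ hZ₁)
    _ = (∫ x, exp (-Φ₁ x) ∂μ)⁻¹ * ((∫ x, exp (-Φ₂ x) ∂μ) - ∫ x, exp (-Φ₁ x) ∂μ) := by
      field_simp
    _ ≤ _ := by gcongr

theorem KLdiv_posterior_le {Φ₁ Φ₂ : α → ℝ} (h₁ : Integrable Φ₁ μ) (h₂ : Integrable Φ₂ μ)
    (h₁0 : ∀ x, 0 ≤ Φ₁ x) (h₂0 : ∀ x, 0 ≤ Φ₂ x) :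
    KLdiv (posterior μ Φ₁) (posterior μ Φ₂) ≤
      ENNReal.ofReal (2 * exp (∫ x, Φ₁ x ∂μ) * ∫ x, |Φ₁ x - Φ₂ x| ∂μ) := by
  have hexp₁ := integrable_exp_neg_of_nonneg h₁.1 h₁0
  have hexp₂ := integrable_exp_neg_of_nonneg h₂.1 h₂0
  have hf₁ : ∀ x, -Φ₁ x ≤ 0 := fun x => neg_nonpos.mpr (h₁0 x)
  have hcross : ∫ x, -Φ₁ x - -Φ₂ x ∂(μ.tilted fun x => -Φ₁ x) ≤
      (∫ x, exp (-Φ₁ x) ∂μ)⁻¹ * ∫ x, |Φ₁ x - Φ₂ x| ∂μ := by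
    simp only [neg_sub_neg, abs_sub_comm (Φ₁ _)]
    exact integral_tilted_le_of_nonpos hf₁ (h₂.sub h₁)
  have hnorm : (∫ x, exp (-Φ₁ x) ∂μ)⁻¹ ≤ exp (∫ x, Φ₁ x ∂μ) := inv_integral_exp_neg_le h₁ hexp₁
  have hD : 0 ≤ ∫ x, |Φ₁ x - Φ₂ x| ∂μ := integral_nonneg fun x => abs_nonneg _
  rw [posterior_eq_tilted, posterior_eq_tilted]
  refine KLdiv_tilted_le hexp₁ hexp₂
    (integrable_tilted_of_nonpos hexp₁ hf₁ (h₁.neg.sub h₂.neg)) ?_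
  have hlog := log_integral_exp_neg_sub_le h₁ h₂ h₁0 h₂0
  have := mul_le_mul_of_nonneg_right hnorm hD
  linarith

theorem max_KLdiv_posterior_le {Φ₁ Φ₂ : α → ℝ} (h₁ : Integrable Φ₁ μ) (h₂ : Integrable Φ₂ μ)
    (h₁0 : ∀ x, 0 ≤ Φ₁ x) (h₂0 : ∀ x, 0 ≤ Φ₂ x) :
    max (KLdiv (posterior μ Φ₁) (posterior μ Φ₂)) (KLdiv (posterior μ Φ₂) (posterior μ Φ₁)) ≤
      ENNReal.ofReal
        (2 * exp ((∫ x, Φ₁ x ∂μ) + ∫ x, Φ₂ x ∂μ) * ∫ x, |Φ₁ x - Φ₂ x| ∂μ) := by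
  have hD : 0 ≤ ∫ x, |Φ₁ x - Φ₂ x| ∂μ := integral_nonneg fun x => abs_nonneg _
  have hI₁ : 0 ≤ ∫ x, Φ₁ x ∂μ := integral_nonneg h₁0
  have hI₂ : 0 ≤ ∫ x, Φ₂ x ∂μ := integral_nonneg h₂0
  refine max_le ((KLdiv_posterior_le h₁ h₂ h₁0 h₂0).trans ?_)
    ((KLdiv_posterior_le h₂ h₁ h₂0 h₁0).trans ?_) <;> refine ENNReal.ofReal_le_ofReal ?_
  · gcongr; linarith
  · simp only [abs_sub_comm (Φ₂ _)]
    gcongr; linarith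

end Posterior

section QuadraticForm

variable {ι : Type*} [Fintype ι]

lemma dotProduct_mulVec_comm {L : Matrix ι ι ℝ} (hL : L.IsHermitian) (u v : ι → ℝ) :
    u ⬝ᵥ (L *ᵥ v) = v ⬝ᵥ (L *ᵥ u) := by
  have hsymm : Lᵀ = L := by simpa [conjTranspose_eq_transpose_of_trivial] using hL.eq
  rw [dotProduct_mulVec, ← mulVec_transpose, hsymm, dotProduct_comm]

lemma dotProduct_mulVec_self_sub {L : Matrix ι ι ℝ} (hL : L.IsHermitian) (w z : ι → ℝ) :
    w ⬝ᵥ (L *ᵥ w) - z ⬝ᵥ (L *ᵥ z) = (w + z) ⬝ᵥ (L *ᵥ (w - z)) := by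
  simp only [mulVec_sub, dotProduct_sub, add_dotProduct, dotProduct_mulVec_comm hL z w]
  ring

lemma sqrt_dotProduct_self (v : ι → ℝ) : √(v ⬝ᵥ v) = ‖WithLp.toLp 2 v‖ := by
  rw [EuclideanSpace.norm_eq, dotProduct]
  simp [sq]

lemma abs_dotProduct_le (u v : ι → ℝ) : |u ⬝ᵥ v| ≤ √(u ⬝ᵥ u) * √(v ⬝ᵥ v) := by
  rw [sqrt_dotProduct_self, sqrt_dotProduct_self, ← Real.norm_eq_abs]
  simpa [EuclideanSpace.inner_toLp_toLp, dotProduct_comm] using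
    norm_inner_le_norm (𝕜 := ℝ) (WithLp.toLp 2 u) (WithLp.toLp 2 v)

lemma Matrix.PosSemidef.dotProduct_mulVec_self_nonneg {L : Matrix ι ι ℝ} (hL : L.PosSemidef)
    (v : ι → ℝ) : 0 ≤ v ⬝ᵥ (L *ᵥ v) := by
  simpa using hL.dotProduct_mulVec_nonneg v

variable [DecidableEq ι]

lemma posSemidefSqrt_eq_cfc {L : Matrix ι ι ℝ} (hL : L.PosSemidef) :
    posSemidefSqrt hL = cfc Real.sqrt L := by
  rw [hL.1.cfc_eq, IsHermitian.cfc, Unitary.conjStarAlgAut_apply]; rfl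

lemma posSemidefSqrt_isHermitian {L : Matrix ι ι ℝ} (hL : L.PosSemidef) :
    (posSemidefSqrt hL).IsHermitian := by
  rw [posSemidefSqrt_eq_cfc]; exact cfc_predicate Real.sqrt L

lemma posSemidefSqrt_mul_self {L : Matrix ι ι ℝ} (hL : L.PosSemidef) :
    posSemidefSqrt hL * posSemidefSqrt hL = L := by
  have hspec : ∀ x ∈ spectrum ℝ L, 0 ≤ x := by
    rw [hL.1.spectrum_real_eq_range_eigenvalues]; rintro _ ⟨i, rfl⟩; exact hL.eigenvalues_nonneg i
  rw [posSemidefSqrt_eq_cfc, ← cfc_mul Real.sqrt Real.sqrt L]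
  exact (cfc_congr fun x hx => mul_self_sqrt (hspec x hx)).trans (cfc_id ℝ L hL.1.isSelfAdjoint)

lemma posSemidefSqrt_mul_posSemidefSqrt_inv {M : Matrix ι ι ℝ} (hM : M.PosDef) :
    posSemidefSqrt hM.posSemidef * posSemidefSqrt hM.inv.posSemidef = 1 := by
  have hspec : ∀ x ∈ spectrum ℝ M, 0 < x := by
    rw [hM.1.spectrum_real_eq_range_eigenvalues]; rintro _ ⟨i, rfl⟩; exact hM.eigenvalues_pos i
  have hne : spectrum ℝ M ⊆ {0}ᶜ := fun x hx => (hspec x hx).ne'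
  have hinv : M⁻¹ = cfc (fun x : ℝ => x⁻¹) M := by
    have := cfc_inv (R := ℝ) (id : ℝ → ℝ) M (fun x hx => (hspec x hx).ne')
      (ha := hM.1.isSelfAdjoint)
    rw [cfc_id ℝ M hM.1.isSelfAdjoint] at this
    rw [nonsing_inv_eq_ringInverse, ← this]; rfl
  rw [posSemidefSqrt_eq_cfc, posSemidefSqrt_eq_cfc, hinv,
    ← cfc_comp Real.sqrt (fun x : ℝ => x⁻¹) M hM.1.isSelfAdjoint
      (hf := continuousOn_inv₀.mono hne),
    ← cfc_mul Real.sqrt _ M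
      (hg := continuous_sqrt.comp_continuousOn (continuousOn_inv₀.mono hne))]
  refine (cfc_congr fun x hx => ?_).trans (cfc_one ℝ M hM.1.isSelfAdjoint)
  simp only [Pi.one_apply, Function.comp_apply, sqrt_inv]
  exact mul_inv_cancel₀ (sqrt_pos.mpr (hspec x hx)).ne'

lemma dotProduct_mulVec_eq_posSemidefSqrt {L : Matrix ι ι ℝ} (hL : L.PosSemidef) (u v : ι → ℝ) :
    u ⬝ᵥ (L *ᵥ v) = (posSemidefSqrt hL *ᵥ u) ⬝ᵥ (posSemidefSqrt hL *ᵥ v) := by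
  have hsymm : (posSemidefSqrt hL)ᵀ = posSemidefSqrt hL := by
    simpa [conjTranspose_eq_transpose_of_trivial] using (posSemidefSqrt_isHermitian hL).eq
  conv_lhs => rw [← posSemidefSqrt_mul_self hL]
  rw [← mulVec_mulVec, dotProduct_mulVec, ← mulVec_transpose, hsymm]

lemma Matrix.PosSemidef.abs_dotProduct_mulVec_le {L : Matrix ι ι ℝ} (hL : L.PosSemidef)
    (u v : ι → ℝ) :
    |u ⬝ᵥ (L *ᵥ v)| ≤ √(u ⬝ᵥ (L *ᵥ u)) * √(v ⬝ᵥ (L *ᵥ v)) := by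
  simp only [dotProduct_mulVec_eq_posSemidefSqrt hL]
  exact abs_dotProduct_le _ _

end QuadraticForm

section MisfitDifference

variable {n : ℕ}

lemma sqrt_dotProduct_mulVec_le_matOpNorm {A B : Matrix (Fin n) (Fin n) ℝ} (hA : A.PosSemidef)
    (hB : B.PosDef) (z : Fin n → ℝ) :
    √(z ⬝ᵥ (A *ᵥ z)) ≤
      matOpNorm (posSemidefSqrt hA * posSemidefSqrt hB.posSemidef) * √(z ⬝ᵥ (B⁻¹ *ᵥ z)) := by
  set T := posSemidefSqrt hA * posSemidefSqrt hB.posSemidef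
  set v := posSemidefSqrt hB.inv.posSemidef *ᵥ z
  have hz : posSemidefSqrt hA *ᵥ z = T *ᵥ v := by
    rw [mulVec_mulVec, mul_assoc, posSemidefSqrt_mul_posSemidefSqrt_inv hB, mul_one]
  rw [dotProduct_mulVec_eq_posSemidefSqrt hA,
    dotProduct_mulVec_eq_posSemidefSqrt hB.inv.posSemidef, hz, sqrt_dotProduct_self,
    sqrt_dotProduct_self]
  simpa [matOpNorm] using
    (LinearMap.toContinuousLinearMap (toEuclideanLin T)).le_opNorm (WithLp.toLp 2 v)

lemma abs_dotProduct_mulVec_sub_le {L H : Matrix (Fin n) (Fin n) ℝ} (hL : L.PosSemidef)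
    {C : ℝ} (w b : Fin n → ℝ)
    (hC : √((w - b) ⬝ᵥ (L *ᵥ (w - b))) ≤ C * √((w - b) ⬝ᵥ (H *ᵥ (w - b)))) :
    |w ⬝ᵥ (L *ᵥ w) - (w - b) ⬝ᵥ (H *ᵥ (w - b))| ≤
      √(b ⬝ᵥ (L *ᵥ b)) * (√(w ⬝ᵥ (L *ᵥ w)) + C * √((w - b) ⬝ᵥ (H *ᵥ (w - b)))) +
        |(w - b) ⬝ᵥ (L *ᵥ (w - b)) - (w - b) ⬝ᵥ (H *ᵥ (w - b))| := by
  have hsplit : w ⬝ᵥ (L *ᵥ w) - (w - b) ⬝ᵥ (H *ᵥ (w - b)) =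
      (w ⬝ᵥ (L *ᵥ b) + (w - b) ⬝ᵥ (L *ᵥ b)) +
        ((w - b) ⬝ᵥ (L *ᵥ (w - b)) - (w - b) ⬝ᵥ (H *ᵥ (w - b))) := by
    have := dotProduct_mulVec_self_sub hL.1 w (w - b)
    rw [_root_.sub_sub_cancel, add_dotProduct] at this
    linarith
  have hw := hL.abs_dotProduct_mulVec_le w b
  have hz := hL.abs_dotProduct_mulVec_le (w - b) b
  have hb : 0 ≤ √(b ⬝ᵥ (L *ᵥ b)) := sqrt_nonneg _
  rw [hsplit]
  refine (abs_add_le _ _).trans (add_le_add_left ((abs_add_le _ _).trans ?_) _)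
  nlinarith [mul_le_mul_of_nonneg_right hC hb]

lemma integrable_dotProduct_mulVec_of_sqrt_le {X : Type*} [MeasurableSpace X] {μ : Measure X}
    {L H : Matrix (Fin n) (Fin n) ℝ} (hL : L.PosSemidef) (hH : H.PosSemidef) {C : ℝ}
    (hC : ∀ z, √(z ⬝ᵥ (L *ᵥ z)) ≤ C * √(z ⬝ᵥ (H *ᵥ z))) {z : X → Fin n → ℝ}
    (hz : AEStronglyMeasurable z μ) (hzH : Integrable (fun θ => z θ ⬝ᵥ (H *ᵥ z θ)) μ) :
    Integrable (fun θ => z θ ⬝ᵥ (L *ᵥ z θ)) μ := by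
  have hmeas : AEStronglyMeasurable (fun θ => z θ ⬝ᵥ (L *ᵥ z θ)) μ :=
    (by fun_prop : Continuous fun v : Fin n → ℝ => v ⬝ᵥ (L *ᵥ v)).comp_aestronglyMeasurable hz
  refine (hzH.const_mul (C ^ 2)).mono' hmeas (ae_of_all _ fun θ => ?_)
  have h := pow_le_pow_left₀ (sqrt_nonneg _) (hC (z θ)) 2
  rw [mul_pow, sq_sqrt (hL.dotProduct_mulVec_self_nonneg _),
    sq_sqrt (hH.dotProduct_mulVec_self_nonneg _)] at h
  rwa [norm_of_nonneg (hL.dotProduct_mulVec_self_nonneg _)]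

lemma two_mul_integral_abs_sub_le {X : Type*} [MeasurableSpace X] {μ : Measure X}
    [IsProbabilityMeasure μ] {L H : Matrix (Fin n) (Fin n) ℝ} (hL : L.PosSemidef)
    (hH : H.PosSemidef) {C : ℝ} (hC0 : 0 ≤ C)
    (hC : ∀ z, √(z ⬝ᵥ (L *ᵥ z)) ≤ C * √(z ⬝ᵥ (H *ᵥ z)))
    {w : X → Fin n → ℝ} (hw : AEStronglyMeasurable w μ) (b : Fin n → ℝ) {Φ₁ Φ₂ : X → ℝ}
    (h₁ : Integrable Φ₁ μ) (h₂ : Integrable Φ₂ μ)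
    (hΦ₁ : ∀ θ, w θ ⬝ᵥ (L *ᵥ w θ) = 2 * Φ₁ θ)
    (hΦ₂ : ∀ θ, (w θ - b) ⬝ᵥ (H *ᵥ (w θ - b)) = 2 * Φ₂ θ) :
    2 * ∫ θ, |Φ₁ θ - Φ₂ θ| ∂μ ≤
      √(b ⬝ᵥ (L *ᵥ b)) * (√2 * (√(∫ θ, Φ₁ θ ∂μ) + C * √(∫ θ, Φ₂ θ ∂μ))) +
        ∫ θ, |(w θ - b) ⬝ᵥ (L *ᵥ (w θ - b)) - (w θ - b) ⬝ᵥ (H *ᵥ (w θ - b))| ∂μ := by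
  have h₁0 (θ : X) : 0 ≤ 2 * Φ₁ θ := hΦ₁ θ ▸ hL.dotProduct_mulVec_self_nonneg _
  have h₂0 (θ : X) : 0 ≤ 2 * Φ₂ θ := hΦ₂ θ ▸ hH.dotProduct_mulVec_self_nonneg _
  have hzH : Integrable (fun θ => (w θ - b) ⬝ᵥ (H *ᵥ (w θ - b))) μ := by
    simpa only [hΦ₂] using h₂.const_mul 2
  have hzL := integrable_dotProduct_mulVec_of_sqrt_le hL hH hC
    (hw.sub aestronglyMeasurable_const) hzH
  have hs₁ := integrable_sqrt_of_nonneg (h₁.const_mul 2) h₁0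
  have hs₂ := integrable_sqrt_of_nonneg (h₂.const_mul 2) h₂0
  have hsqrt : Integrable (fun θ => √(b ⬝ᵥ (L *ᵥ b)) * (√(2 * Φ₁ θ) + C * √(2 * Φ₂ θ))) μ :=
    (hs₁.add (hs₂.const_mul C)).const_mul _
  have hdiff : Integrable (fun θ =>
      |(w θ - b) ⬝ᵥ (L *ᵥ (w θ - b)) - (w θ - b) ⬝ᵥ (H *ᵥ (w θ - b))|) μ :=
    (hzL.sub hzH).abs
  calc 2 * ∫ θ, |Φ₁ θ - Φ₂ θ| ∂μ = ∫ θ, |2 * Φ₁ θ - 2 * Φ₂ θ| ∂μ := by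
        simp only [← mul_sub, abs_mul, abs_two, integral_const_mul]
    _ ≤ ∫ θ, (√(b ⬝ᵥ (L *ᵥ b)) * (√(2 * Φ₁ θ) + C * √(2 * Φ₂ θ)) +
          |(w θ - b) ⬝ᵥ (L *ᵥ (w θ - b)) - (w θ - b) ⬝ᵥ (H *ᵥ (w θ - b))|) ∂μ :=
        integral_mono ((h₁.const_mul 2).sub (h₂.const_mul 2)).abs (hsqrt.add hdiff) fun θ => by
          simpa only [hΦ₁, hΦ₂, mul_sub] using abs_dotProduct_mulVec_sub_le hL (w θ) b (hC _)
    _ = √(b ⬝ᵥ (L *ᵥ b)) * (∫ θ, √(2 * Φ₁ θ) ∂μ + C * ∫ θ, √(2 * Φ₂ θ) ∂μ) +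
          ∫ θ, |(w θ - b) ⬝ᵥ (L *ᵥ (w θ - b)) - (w θ - b) ⬝ᵥ (H *ᵥ (w θ - b))| ∂μ := by
      rw [integral_add hsqrt hdiff, integral_const_mul, integral_add hs₁ (hs₂.const_mul C),
        integral_const_mul]
    _ ≤ √(b ⬝ᵥ (L *ᵥ b)) * (√(∫ θ, 2 * Φ₁ θ ∂μ) + C * √(∫ θ, 2 * Φ₂ θ ∂μ)) +
          ∫ θ, |(w θ - b) ⬝ᵥ (L *ᵥ (w θ - b)) - (w θ - b) ⬝ᵥ (H *ᵥ (w θ - b))| ∂μ := by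
      gcongr
      · exact integral_sqrt_le_sqrt_integral (h₁.const_mul 2) h₁0
      · exact integral_sqrt_le_sqrt_integral (h₂.const_mul 2) h₂0
    _ = _ := by
      rw [integral_const_mul, integral_const_mul, sqrt_mul zero_le_two, sqrt_mul zero_le_two]
      ring

end MisfitDifference

lemma mul_add_le_max_one_mul_add {A K Q : ℝ} (hK : 0 ≤ K) (hQ : 0 ≤ Q) :
    K * A + Q ≤ max A 1 * (K + Q) := by
  nlinarith [le_max_left A 1, le_max_right A 1]

theorem stmt8_general {X U : Type*} [MeasurableSpace X] [NormedAddCommGroup U] [NormedSpace ℝ U]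
    [MeasurableSpace U] [BorelSpace U]
    (μ : Measure X) [IsProbabilityMeasure μ] {n : ℕ}
    (Mappr : X → U) (hMappr : Measurable Mappr)
    (O : U →L[ℝ] (Fin n → ℝ)) (y : Fin n → ℝ) (mε : U)
    (Γ : Matrix (Fin n) (Fin n) ℝ) (hΓ : Γ.PosDef)
    (S : Matrix (Fin n) (Fin n) ℝ) (hS : S.PosSemidef)
    (Ce : ℝ)
    (hCe : Ce = matOpNorm (posSemidefSqrt hΓ.inv.posSemidef * posSemidefSqrt (hΓ.add_posSemidef hS).posSemidef))
    (Φappr Φenh : X → ℝ)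
    (hΦappr : Φappr = fun θ => (1/2) * ((y - O (Mappr θ)) ⬝ᵥ (Γ⁻¹ *ᵥ (y - O (Mappr θ)))))
    (hΦenh : Φenh = fun θ => (1/2) *
      ((y - O (Mappr θ) - O mε) ⬝ᵥ ((Γ + S)⁻¹ *ᵥ (y - O (Mappr θ) - O mε))))
    (hia : Integrable Φappr μ) (hie : Integrable Φenh μ) :
    max (KLdiv (posterior μ Φappr) (posterior μ Φenh))
        (KLdiv (posterior μ Φenh) (posterior μ Φappr)) ≤
      ENNReal.ofReal
        ((Real.exp (2 * (∫ θ, |Φappr θ| ∂μ) + 2 * ∫ θ, |Φenh θ| ∂μ) *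
            max (Real.sqrt 2 *
              (Real.sqrt (∫ θ, |Φappr θ| ∂μ) + Ce * Real.sqrt (∫ θ, |Φenh θ| ∂μ))) 1) *
          (Real.sqrt ((O mε) ⬝ᵥ (Γ⁻¹ *ᵥ (O mε))) +
            ∫ θ, |((y - O (Mappr θ) - O mε) ⬝ᵥ (Γ⁻¹ *ᵥ (y - O (Mappr θ) - O mε))) -
              ((y - O (Mappr θ) - O mε) ⬝ᵥ ((Γ + S)⁻¹ *ᵥ (y - O (Mappr θ) - O mε)))| ∂μ)) := by
  have hL := hΓ.inv.posSemidef
  have hH := (hΓ.add_posSemidef hS).inv.posSemidef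
  have h2a (θ : X) : (y - O (Mappr θ)) ⬝ᵥ (Γ⁻¹ *ᵥ (y - O (Mappr θ))) = 2 * Φappr θ := by
    simp [hΦappr]
  have h2e (θ : X) : (y - O (Mappr θ) - O mε) ⬝ᵥ ((Γ + S)⁻¹ *ᵥ (y - O (Mappr θ) - O mε)) =
      2 * Φenh θ := by
    simp [hΦenh]
  have ha0 (θ : X) : 0 ≤ Φappr θ := by
    linarith [h2a θ, hL.dotProduct_mulVec_self_nonneg (y - O (Mappr θ))]
  have he0 (θ : X) : 0 ≤ Φenh θ := by
    linarith [h2e θ, hH.dotProduct_mulVec_self_nonneg (y - O (Mappr θ) - O mε)]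
  have hD := two_mul_integral_abs_sub_le hL hH (hCe ▸ norm_nonneg _)
    (fun z => hCe ▸ sqrt_dotProduct_mulVec_le_matOpNorm hL (hΓ.add_posSemidef hS) z)
    ((continuous_const.sub O.continuous).measurable.comp hMappr).aestronglyMeasurable (O mε)
    hia hie h2a h2e
  have hI : (∫ θ, Φappr θ ∂μ) + ∫ θ, Φenh θ ∂μ ≤
      2 * (∫ θ, Φappr θ ∂μ) + 2 * ∫ θ, Φenh θ ∂μ := by
    linarith [integral_nonneg (μ := μ) (f := Φappr) ha0, integral_nonneg (μ := μ) (f := Φenh) he0]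
  simp only [abs_of_nonneg (ha0 _), abs_of_nonneg (he0 _)]
  refine (max_KLdiv_posterior_le hia hie ha0 he0).trans (ENNReal.ofReal_le_ofReal ?_)
  calc 2 * exp ((∫ θ, Φappr θ ∂μ) + ∫ θ, Φenh θ ∂μ) * ∫ θ, |Φappr θ - Φenh θ| ∂μ
      = exp ((∫ θ, Φappr θ ∂μ) + ∫ θ, Φenh θ ∂μ) * (2 * ∫ θ, |Φappr θ - Φenh θ| ∂μ) := by ring
    _ ≤ _ := by
      rw [mul_assoc]
      exact mul_le_mul (exp_le_exp.mpr hI) (hD.trans (mul_add_le_max_one_mul_add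
        (sqrt_nonneg _) (integral_nonneg fun θ => abs_nonneg _))) (by positivity) (exp_pos _).le

theorem stmt8 {X U : Type*} [MeasurableSpace X] [NormedAddCommGroup U] [NormedSpace ℝ U]
    [CompleteSpace U] [MeasurableSpace U] [BorelSpace U]
    (μ : Measure X) [IsProbabilityMeasure μ] {n : ℕ}
    (Mappr : X → U) (hMappr : Measurable Mappr)
    (O : U →L[ℝ] (Fin n → ℝ)) (y : Fin n → ℝ) (mε : U)
    (Γ : Matrix (Fin n) (Fin n) ℝ) (hΓ : Γ.PosDef)
    (S : Matrix (Fin n) (Fin n) ℝ) (hS : S.PosSemidef)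
    (Ce : ℝ)
    (hCe : Ce = matOpNorm (posSemidefSqrt hΓ.inv.posSemidef * posSemidefSqrt (hΓ.add_posSemidef hS).posSemidef))
    (Φappr Φenh : X → ℝ)
    (hΦappr : Φappr = fun θ => (1/2) * ((y - O (Mappr θ)) ⬝ᵥ (Γ⁻¹ *ᵥ (y - O (Mappr θ)))))
    (hΦenh : Φenh = fun θ => (1/2) *
      ((y - O (Mappr θ) - O mε) ⬝ᵥ ((Γ + S)⁻¹ *ᵥ (y - O (Mappr θ) - O mε))))
    (hia : Integrable Φappr μ) (hie : Integrable Φenh μ) :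
    max (KLdiv (posterior μ Φappr) (posterior μ Φenh))
        (KLdiv (posterior μ Φenh) (posterior μ Φappr)) ≤
      ENNReal.ofReal
        ((Real.exp (2 * (∫ θ, |Φappr θ| ∂μ) + 2 * ∫ θ, |Φenh θ| ∂μ) *
            max (Real.sqrt 2 *
              (Real.sqrt (∫ θ, |Φappr θ| ∂μ) + Ce * Real.sqrt (∫ θ, |Φenh θ| ∂μ))) 1) *
          (Real.sqrt ((O mε) ⬝ᵥ (Γ⁻¹ *ᵥ (O mε))) +
            ∫ θ, |((y - O (Mappr θ) - O mε) ⬝ᵥ (Γ⁻¹ *ᵥ (y - O (Mappr θ) - O mε))) -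
              ((y - O (Mappr θ) - O mε) ⬝ᵥ ((Γ + S)⁻¹ *ᵥ (y - O (Mappr θ) - O mε)))| ∂μ)) :=
  stmt8_general μ Mappr hMappr O y mε Γ hΓ S hS Ce hCe Φappr Φenh hΦappr hΦenh hia hie
end

section
/- If the lifted best misfit Φ^† is in L¹_{μ_θ} and the joint misfit Φ^j is in L¹_{μ_θ⊗μ_δ}, then ‖Φ^† − Φ^j‖_{L¹_{μ_θ⊗μ_δ}} ≤ 2^{−1/2} · ( ∫∫ |O(δ^†(θ) − e(θ,w))|²_{Σ_η^{−1}} d(μ_θ⊗μ_δ)(θ,w) )^{1/2} · ( ‖Φ^j‖_{L¹_{μ_θ⊗μ_δ}}^{1/2} + ‖Φ^†‖_{L¹_{μ_θ}}^{1/2} ). Furthermore, ( ∫∫ |O(δ^†(θ) − e(θ,w))|²_{Σ_η^{−1}} d(μ_θ⊗μ_δ) )^{1/2} ≤ 2^{1/2} · ( ‖Φ^j‖_{L¹_{μ_θ⊗μ_δ}}^{1/2} + ‖Φ^†‖_{L¹_{μ_θ}}^{1/2} ). -/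
/-!
Factor `Γ⁻¹ = SᵀS`: both misfits become halved squared Euclidean norms `½‖a‖²`, `½‖b‖²`, and the
model-error term becomes `‖a - b‖²`. Pointwise, `|‖a‖² - ‖b‖²|` and `‖a - b‖²` are both bounded by
`‖a - b‖ (‖a‖ + ‖b‖)`, whose integral the Cauchy–Schwarz inequality in `L²` bounds by
`‖a - b‖₂ (‖a‖₂ + ‖b‖₂)`.
-/

open MeasureTheory Real Matrix

section L2
variable {α E : Type*} [MeasurableSpace α] {μ : Measure α} [NormedAddCommGroup E] {a b : α → E}

theorem abs_norm_sq_sub_norm_sq_le (u v : E) : |‖u‖ ^ 2 - ‖v‖ ^ 2| ≤ ‖u - v‖ * (‖u‖ + ‖v‖) := by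
  rw [sq_sub_sq, abs_mul, abs_of_nonneg (by positivity), mul_comm]
  exact mul_le_mul_of_nonneg_right (abs_norm_sub_norm_le u v) (by positivity)

theorem integrable_norm_mul_norm (ha : MemLp a 2 μ) (hb : MemLp b 2 μ) :
    Integrable (fun x => ‖a x‖ * ‖b x‖) μ :=
  ha.norm.integrable_mul hb.norm

theorem integral_norm_mul_norm_le (ha : MemLp a 2 μ) (hb : MemLp b 2 μ) :
    ∫ x, ‖a x‖ * ‖b x‖ ∂μ ≤ √(∫ x, ‖a x‖ ^ 2 ∂μ) * √(∫ x, ‖b x‖ ^ 2 ∂μ) := by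
  have h2 : ENNReal.ofReal 2 = 2 := by norm_num
  have := integral_mul_norm_le_Lp_mul_Lq Real.HolderConjugate.two_two (h2 ▸ ha) (h2 ▸ hb)
  simpa only [Real.sqrt_eq_rpow, one_div, Real.rpow_two] using this

theorem integrable_norm_sub_mul_add_norm (ha : MemLp a 2 μ) (hb : MemLp b 2 μ) :
    Integrable (fun x => ‖a x - b x‖ * (‖a x‖ + ‖b x‖)) μ := by
  have hab : MemLp (fun x => a x - b x) 2 μ := ha.sub hb
  simp only [mul_add]
  exact (integrable_norm_mul_norm hab ha).add (integrable_norm_mul_norm hab hb)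

theorem integral_norm_sub_mul_add_norm_le (ha : MemLp a 2 μ) (hb : MemLp b 2 μ) :
    ∫ x, ‖a x - b x‖ * (‖a x‖ + ‖b x‖) ∂μ ≤
      √(∫ x, ‖a x - b x‖ ^ 2 ∂μ) * (√(∫ x, ‖a x‖ ^ 2 ∂μ) + √(∫ x, ‖b x‖ ^ 2 ∂μ)) := by
  have hab : MemLp (fun x => a x - b x) 2 μ := ha.sub hb
  simp only [mul_add]
  rw [integral_add (integrable_norm_mul_norm hab ha) (integrable_norm_mul_norm hab hb)]
  exact add_le_add (integral_norm_mul_norm_le hab ha) (integral_norm_mul_norm_le hab hb)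

theorem integral_abs_norm_sq_sub_norm_sq_le (ha : MemLp a 2 μ) (hb : MemLp b 2 μ) :
    ∫ x, |‖a x‖ ^ 2 - ‖b x‖ ^ 2| ∂μ ≤
      √(∫ x, ‖a x - b x‖ ^ 2 ∂μ) * (√(∫ x, ‖a x‖ ^ 2 ∂μ) + √(∫ x, ‖b x‖ ^ 2 ∂μ)) :=
  (integral_mono_of_nonneg (.of_forall fun _ => abs_nonneg _)
    (integrable_norm_sub_mul_add_norm ha hb)
    (.of_forall fun x => abs_norm_sq_sub_norm_sq_le (a x) (b x))).trans
    (integral_norm_sub_mul_add_norm_le ha hb)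

theorem sqrt_integral_norm_sub_sq_le (ha : MemLp a 2 μ) (hb : MemLp b 2 μ) :
    √(∫ x, ‖a x - b x‖ ^ 2 ∂μ) ≤ √(∫ x, ‖a x‖ ^ 2 ∂μ) + √(∫ x, ‖b x‖ ^ 2 ∂μ) := by
  set D := √(∫ x, ‖a x - b x‖ ^ 2 ∂μ)
  have hD : D * D ≤ D * (√(∫ x, ‖a x‖ ^ 2 ∂μ) + √(∫ x, ‖b x‖ ^ 2 ∂μ)) := by
    rw [Real.mul_self_sqrt (integral_nonneg fun x => by positivity)]
    refine (integral_mono ((ha.sub hb).integrable_norm_pow two_ne_zero)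
      (integrable_norm_sub_mul_add_norm ha hb) fun x => ?_).trans
      (integral_norm_sub_mul_add_norm_le ha hb)
    rw [sq]
    exact mul_le_mul_of_nonneg_left (norm_sub_le _ _) (norm_nonneg _)
  rcases (show 0 ≤ D from Real.sqrt_nonneg _).eq_or_lt with h0 | hpos
  · rw [← h0]; positivity
  · exact le_of_mul_le_mul_left hD hpos

theorem sqrt_integral_half_mul (f : α → ℝ) :
    √(∫ x, 1 / 2 * f x ∂μ) = (√2)⁻¹ * √(∫ x, f x ∂μ) := by
  rw [integral_const_mul, Real.sqrt_mul (by norm_num), one_div, Real.sqrt_inv]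

theorem integral_abs_half_norm_sq_sub_le (ha : MemLp a 2 μ) (hb : MemLp b 2 μ) :
    ∫ x, |1 / 2 * ‖a x‖ ^ 2 - 1 / 2 * ‖b x‖ ^ 2| ∂μ ≤ (√2)⁻¹ * √(∫ x, ‖a x - b x‖ ^ 2 ∂μ) *
      (√(∫ x, 1 / 2 * ‖a x‖ ^ 2 ∂μ) + √(∫ x, 1 / 2 * ‖b x‖ ^ 2 ∂μ)) := by
  have h2 : (√2)⁻¹ * (√2)⁻¹ = (1 / 2 : ℝ) := by
    rw [← mul_inv, Real.mul_self_sqrt zero_le_two, one_div]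
  rw [sqrt_integral_half_mul, sqrt_integral_half_mul]
  simp only [← mul_sub, abs_mul, abs_of_pos (one_half_pos (α := ℝ)), integral_const_mul]
  calc 1 / 2 * ∫ x, |‖a x‖ ^ 2 - ‖b x‖ ^ 2| ∂μ
      ≤ 1 / 2 * (√(∫ x, ‖a x - b x‖ ^ 2 ∂μ) *
        (√(∫ x, ‖a x‖ ^ 2 ∂μ) + √(∫ x, ‖b x‖ ^ 2 ∂μ))) := by
        gcongr; exact integral_abs_norm_sq_sub_norm_sq_le ha hb
    _ = _ := by rw [← h2]; ring

theorem sqrt_integral_norm_sub_sq_le_sqrt_two_mul (ha : MemLp a 2 μ) (hb : MemLp b 2 μ) :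
    √(∫ x, ‖a x - b x‖ ^ 2 ∂μ) ≤
      √2 * (√(∫ x, 1 / 2 * ‖a x‖ ^ 2 ∂μ) + √(∫ x, 1 / 2 * ‖b x‖ ^ 2 ∂μ)) := by
  rw [sqrt_integral_half_mul, sqrt_integral_half_mul, ← mul_add, ← mul_assoc,
    mul_inv_cancel₀ (by positivity), one_mul]
  exact sqrt_integral_norm_sub_sq_le ha hb

theorem MeasureTheory.MemLp.of_integrable_half_mul_norm_sq (hm : AEStronglyMeasurable a μ)
    (h : Integrable (fun x => 1 / 2 * ‖a x‖ ^ 2) μ) : MemLp a 2 μ :=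
  (memLp_two_iff_integrable_sq_norm hm).2
    ((integrable_const_mul_iff (isUnit_iff_ne_zero.2 one_half_pos.ne') _).1 h)

end L2

open scoped MatrixOrder in
theorem Matrix.PosSemidef.exists_dotProduct_mulVec_eq_norm_sq {ι : Type*} [Fintype ι]
    [DecidableEq ι] {M : Matrix ι ι ℝ} (hM : M.PosSemidef) :
    ∃ L : (ι → ℝ) →L[ℝ] EuclideanSpace ℝ ι, ∀ v, v ⬝ᵥ (M *ᵥ v) = ‖L v‖ ^ 2 := by
  obtain ⟨S, rfl⟩ := CStarAlgebra.nonneg_iff_eq_star_mul_self.mp hM.nonneg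
  refine ⟨(EuclideanSpace.equiv ι ℝ).symm.toContinuousLinearMap.comp
    S.mulVecLin.toContinuousLinearMap, fun v => ?_⟩
  rw [EuclideanSpace.real_norm_sq_eq, star_eq_conjTranspose, conjTranspose_eq_transpose_of_trivial,
    ← mulVec_mulVec, dotProduct_mulVec, ← mulVec_transpose, transpose_transpose]
  simp [dotProduct, sq]

theorem stmt10_general {X W U : Type*} [MeasurableSpace X] [MeasurableSpace W]
    [NormedAddCommGroup U] [NormedSpace ℝ U]
    [MeasurableSpace U] [BorelSpace U]
    (μθ : Measure X) [IsProbabilityMeasure μθ] (μδ : Measure W) [IsProbabilityMeasure μδ]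
    {n : ℕ}
    (Mdag Mappr : X → U) (hMdag : Measurable Mdag) (hMappr : Measurable Mappr)
    (e : X × W → U) (he : Measurable e)
    (O : U →L[ℝ] (Fin n → ℝ)) (y : Fin n → ℝ)
    (Γ : Matrix (Fin n) (Fin n) ℝ) (hΓ : Γ.PosDef)
    (Φdag : X → ℝ) (Φjoint : X × W → ℝ)
    (hΦdag : Φdag = fun θ => (1/2) * ((y - O (Mdag θ)) ⬝ᵥ (Γ⁻¹ *ᵥ (y - O (Mdag θ)))))
    (hΦjoint : Φjoint = fun p => (1/2) *
      ((y - O (Mappr p.1) - O (e p)) ⬝ᵥ (Γ⁻¹ *ᵥ (y - O (Mappr p.1) - O (e p)))))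
    (hid : Integrable Φdag μθ) (hij : Integrable Φjoint (μθ.prod μδ)) :
    (∫ p, |Φdag p.1 - Φjoint p| ∂(μθ.prod μδ)) ≤
      (Real.sqrt 2)⁻¹ *
        Real.sqrt (∫ p, |(O (Mdag p.1 - Mappr p.1 - e p)) ⬝ᵥ
          (Γ⁻¹ *ᵥ (O (Mdag p.1 - Mappr p.1 - e p)))| ∂(μθ.prod μδ)) *
        (Real.sqrt (∫ p, |Φjoint p| ∂(μθ.prod μδ)) + Real.sqrt (∫ θ, |Φdag θ| ∂μθ)) ∧
    Real.sqrt (∫ p, |(O (Mdag p.1 - Mappr p.1 - e p)) ⬝ᵥ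
        (Γ⁻¹ *ᵥ (O (Mdag p.1 - Mappr p.1 - e p)))| ∂(μθ.prod μδ)) ≤
      Real.sqrt 2 *
        (Real.sqrt (∫ p, |Φjoint p| ∂(μθ.prod μδ)) + Real.sqrt (∫ θ, |Φdag θ| ∂μθ)) := by
  obtain ⟨L, hL⟩ := hΓ.inv.posSemidef.exists_dotProduct_mulVec_eq_norm_sq
  set A : X → EuclideanSpace ℝ (Fin n) := fun θ => L (y - O (Mdag θ))
  set B : X × W → EuclideanSpace ℝ (Fin n) := fun p => L (y - O (Mappr p.1) - O (e p))
  have hres : ∀ p : X × W, O (Mdag p.1 - Mappr p.1 - e p) ⬝ᵥ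
      (Γ⁻¹ *ᵥ O (Mdag p.1 - Mappr p.1 - e p)) = ‖B p - A p.1‖ ^ 2 := fun p => by
    rw [hL]; congr 2; simp only [A, B, map_sub]; abel
  replace hΦdag : Φdag = fun θ => 1 / 2 * ‖A θ‖ ^ 2 := by simp only [hΦdag, hL, A]
  replace hΦjoint : Φjoint = fun p => 1 / 2 * ‖B p‖ ^ 2 := by simp only [hΦjoint, hL, B]
  subst hΦdag hΦjoint
  have hAm : Measurable A := by fun_prop
  have hBm : Measurable B := by fun_prop
  have hA : MemLp A 2 μθ := .of_integrable_half_mul_norm_sq hAm.aestronglyMeasurable hid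
  have hB : MemLp B 2 (μθ.prod μδ) := .of_integrable_half_mul_norm_sq hBm.aestronglyMeasurable hij
  have hfst : ∫ θ, 1 / 2 * ‖A θ‖ ^ 2 ∂μθ = ∫ p, 1 / 2 * ‖A p.1‖ ^ 2 ∂(μθ.prod μδ) := by
    rw [integral_fun_fst (fun θ => 1 / 2 * ‖A θ‖ ^ 2), probReal_univ, one_smul]
  simp only [hres, abs_mul, abs_pow, abs_norm, abs_of_pos (one_half_pos (α := ℝ)), hfst]
  refine ⟨?_, sqrt_integral_norm_sub_sq_le_sqrt_two_mul hB (hA.comp_fst μδ)⟩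
  simpa only [abs_sub_comm] using integral_abs_half_norm_sq_sub_le hB (hA.comp_fst μδ)

theorem stmt10 {X W U : Type*} [MeasurableSpace X] [MeasurableSpace W]
    [NormedAddCommGroup U] [NormedSpace ℝ U] [CompleteSpace U]
    [MeasurableSpace U] [BorelSpace U]
    (μθ : Measure X) [IsProbabilityMeasure μθ] (μδ : Measure W) [IsProbabilityMeasure μδ]
    {n : ℕ}
    (Mdag Mappr : X → U) (hMdag : Measurable Mdag) (hMappr : Measurable Mappr)
    (e : X × W → U) (he : Measurable e)
    (O : U →L[ℝ] (Fin n → ℝ)) (y : Fin n → ℝ)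
    (Γ : Matrix (Fin n) (Fin n) ℝ) (hΓ : Γ.PosDef)
    (Φdag : X → ℝ) (Φjoint : X × W → ℝ)
    (hΦdag : Φdag = fun θ => (1/2) * ((y - O (Mdag θ)) ⬝ᵥ (Γ⁻¹ *ᵥ (y - O (Mdag θ)))))
    (hΦjoint : Φjoint = fun p => (1/2) *
      ((y - O (Mappr p.1) - O (e p)) ⬝ᵥ (Γ⁻¹ *ᵥ (y - O (Mappr p.1) - O (e p)))))
    (hid : Integrable Φdag μθ) (hij : Integrable Φjoint (μθ.prod μδ)) :
    (∫ p, |Φdag p.1 - Φjoint p| ∂(μθ.prod μδ)) ≤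
      (Real.sqrt 2)⁻¹ *
        Real.sqrt (∫ p, |(O (Mdag p.1 - Mappr p.1 - e p)) ⬝ᵥ
          (Γ⁻¹ *ᵥ (O (Mdag p.1 - Mappr p.1 - e p)))| ∂(μθ.prod μδ)) *
        (Real.sqrt (∫ p, |Φjoint p| ∂(μθ.prod μδ)) + Real.sqrt (∫ θ, |Φdag θ| ∂μθ)) ∧
    Real.sqrt (∫ p, |(O (Mdag p.1 - Mappr p.1 - e p)) ⬝ᵥ
        (Γ⁻¹ *ᵥ (O (Mdag p.1 - Mappr p.1 - e p)))| ∂(μθ.prod μδ)) ≤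
      Real.sqrt 2 *
        (Real.sqrt (∫ p, |Φjoint p| ∂(μθ.prod μδ)) + Real.sqrt (∫ θ, |Φdag θ| ∂μθ)) :=
  stmt10_general μθ μδ Mdag Mappr hMdag hMappr e he O y Γ hΓ Φdag Φjoint hΦdag hΦjoint hid hij
end
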